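/- arXiv:2006.01568 — 5 statements merged into one kernel-verified Lean document; each statement's English description precedes it below -/
import Mathlib

section
/- For any finite poset P, the number of weakly order-preserving maps from P to {0,1,...,m} is a polynomial in m of degree equal to the cardinality of P, whose leading coefficient equals e(P)/(#P)!, where e(P) is the number of linear extensions of P. -/
open scoped Classical

/-- A linear extension of a poset `P`, represented as a list `(f 0, f 1, ..., f (n-1))`
of the elements of `P`, each appearing once, such that `f i ≤ f j` in `P` implies `i ≤ j`. -/
def IsLinExt {P : Type*} [PartialOrder P] {n : ℕ} (f : Fin n ≃ P) : Prop :=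
  ∀ i j : Fin n, f i ≤ f j → i ≤ j

/-- The Bender–Knuth involution swapping the entries in (0-indexed) positions `i` and `i+1`
of a linear extension, provided those two entries are incomparable. -/
noncomputable def bk {P : Type*} [PartialOrder P] (n : ℕ) (i : ℕ) (f : Fin n ≃ P) : Fin n ≃ P :=
  if h : i + 1 < n then
    if ¬ f ⟨i, Nat.lt_of_succ_lt h⟩ ≤ f ⟨i + 1, h⟩ ∧
       ¬ f ⟨i + 1, h⟩ ≤ f ⟨i, Nat.lt_of_succ_lt h⟩ then
      (Equiv.swap ⟨i, Nat.lt_of_succ_lt h⟩ ⟨i + 1, h⟩).trans f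
    else f
  else f

open Finset Polynomial

section Aux

variable {P : Type*} [PartialOrder P] [Fintype P]

/-- number of monotone surjections from `P` onto the chain `Fin k`. -/
noncomputable def surjCount (P : Type*) [PartialOrder P] [Fintype P] (k : ℕ) : ℕ :=
  Nat.card {g : P → Fin k // Monotone g ∧ Function.Surjective g}

noncomputable def fiberEquiv (m : ℕ) (s : Finset (Fin (m + 1))) :
    {f : P → Fin (m + 1) // Monotone f ∧ Finset.image f Finset.univ = s} ≃
      {g : P → Fin s.card // Monotone g ∧ Function.Surjective g} := by
  classical
  set σ : Fin s.card ≃o s := s.orderIsoOfFin rfl with hσ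
  refine
    { toFun := fun x => ⟨fun p => σ.symm ⟨x.1 p, by
        have := Finset.mem_image_of_mem x.1 (Finset.mem_univ p)
        rwa [x.2.2] at this⟩, ?_, ?_⟩
      invFun := fun y => ⟨fun p => (σ (y.1 p) : Fin (m + 1)), ?_, ?_⟩
      left_inv := ?_
      right_inv := ?_ }
  · intro p q hpq
    exact σ.symm.monotone (Subtype.mk_le_mk.mpr (x.2.1 hpq))
  · intro i
    have hmem : ((σ i : s) : Fin (m + 1)) ∈ Finset.image x.1 Finset.univ := by
      rw [x.2.2]; exact (σ i).2
    obtain ⟨p, -, hp⟩ := Finset.mem_image.mp hmem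
    refine ⟨p, ?_⟩
    have hgoal : (⟨x.1 p, hp ▸ (σ i).2⟩ : {y // y ∈ s}) = σ i := Subtype.ext hp
    calc σ.symm ⟨x.1 p, hp ▸ (σ i).2⟩ = σ.symm (σ i) := by rw [hgoal]
      _ = i := σ.symm_apply_apply i
  · intro p q hpq
    exact Subtype.mk_le_mk.mp (σ.monotone (y.2.1 hpq))
  · ext x
    simp only [Finset.mem_image, Finset.mem_univ, true_and]
    constructor
    · rintro ⟨p, rfl⟩; exact (σ (y.1 p)).2
    · intro hx
      obtain ⟨i, hi⟩ := σ.surjective ⟨x, hx⟩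
      obtain ⟨p, hp⟩ := y.2.2 i
      exact ⟨p, by rw [hp, hi]⟩
  · rintro ⟨f, hf, hs⟩
    apply Subtype.ext; funext p; simp
  · rintro ⟨g, hg, hgs⟩
    apply Subtype.ext; funext p; simp

lemma card_monotone_eq (m : ℕ) :
    Nat.card {f : P → Fin (m + 1) // Monotone f} =
      ∑ k ∈ Finset.range (m + 2), (m + 1).choose k * surjCount P k := by
  classical
  have e1 : {f : P → Fin (m + 1) // Monotone f} ≃
      Σ s : Finset (Fin (m + 1)),
        {f : P → Fin (m + 1) // Monotone f ∧ Finset.image f Finset.univ = s} :=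
    { toFun := fun f => ⟨Finset.image f.1 Finset.univ, f.1, f.2, rfl⟩
      invFun := fun x => ⟨x.2.1, x.2.2.1⟩
      left_inv := fun f => rfl
      right_inv := by rintro ⟨s, f, hf, rfl⟩; rfl }
  rw [Nat.card_eq_fintype_card, Fintype.card_congr e1, Fintype.card_sigma]
  have h2 : ∀ s : Finset (Fin (m + 1)),
      Fintype.card {f : P → Fin (m + 1) // Monotone f ∧ Finset.image f Finset.univ = s}
        = surjCount P s.card := fun s => by
    rw [Fintype.card_congr (fiberEquiv m s), surjCount, Nat.card_eq_fintype_card]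
  simp_rw [h2]
  rw [← Finset.sum_fiberwise_of_maps_to' (s := Finset.univ)
      (g := fun s : Finset (Fin (m + 1)) => s.card) (t := Finset.range (m + 2))
      (fun s _ => Finset.mem_range.mpr
        (Nat.lt_succ_of_le ((Finset.card_le_univ s).trans_eq (by simp)))) (surjCount P)]
  refine Finset.sum_congr rfl fun k _ => ?_
  rw [Finset.sum_const, smul_eq_mul]
  congr 1
  have : (Finset.univ.filter fun s : Finset (Fin (m + 1)) => s.card = k) =
      Finset.powersetCard k Finset.univ := by
    rw [Finset.powersetCard_eq_filter, Finset.powerset_univ]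
  rw [this, Finset.card_powersetCard]
  simp

lemma surjCount_eq_zero {k : ℕ} (hk : Fintype.card P < k) : surjCount P k = 0 := by
  rw [surjCount, Nat.card_eq_zero]
  left
  refine ⟨fun g => ?_⟩
  have := Fintype.card_le_of_surjective g.1 g.2.2
  rw [Fintype.card_fin] at this
  omega

lemma surjCount_card :
    surjCount P (Fintype.card P) = Nat.card {f : Fin (Fintype.card P) ≃ P // IsLinExt f} := by
  classical
  refine Nat.card_congr ?_
  refine
    { toFun := fun x => ⟨(Equiv.ofBijective x.1
        ((Fintype.bijective_iff_surjective_and_card x.1).mpr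
          ⟨x.2.2, by simp⟩)).symm, ?_⟩
      invFun := fun y => ⟨y.1.symm, ?_, y.1.symm.surjective⟩
      left_inv := ?_
      right_inv := ?_ }
  · intro i j hij
    set e := Equiv.ofBijective x.1
        ((Fintype.bijective_iff_surjective_and_card x.1).mpr ⟨x.2.2, by simp⟩)
    have h1 : x.1 (e.symm i) ≤ x.1 (e.symm j) := x.2.1 hij
    have h2 : ∀ i, x.1 (e.symm i) = i := fun i => e.apply_symm_apply i
    rwa [h2, h2] at h1
  · intro p q hpq
    have := y.2 (y.1.symm p) (y.1.symm q) (by simpa using hpq)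
    exact this
  · rintro ⟨g, hg⟩
    apply Subtype.ext
    funext p
    simp [Equiv.symm_apply_eq]
  · rintro ⟨f, hf⟩
    apply Subtype.ext
    apply Equiv.ext
    intro i
    rw [Equiv.symm_apply_eq]
    simp

lemma exists_linExt : Nonempty {f : Fin (Fintype.card P) ≃ P // IsLinExt f} := by
  classical
  letI : Fintype (LinearExtension P) := inferInstanceAs (Fintype P)
  have hcard : Fintype.card (LinearExtension P) = Fintype.card P := rfl
  let e := monoEquivOfFin (LinearExtension P) hcard
  refine ⟨⟨(e.toEquiv : Fin (Fintype.card P) ≃ LinearExtension P), ?_⟩⟩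
  intro i j hij
  have h1 : toLinearExtension (α := P) (e i) ≤ toLinearExtension (α := P) (e j) :=
    toLinearExtension.monotone hij
  exact e.le_iff_le.mp h1

noncomputable def Dp (k : ℕ) : Polynomial ℚ := (descPochhammer ℚ k).comp (X + 1)

lemma Dp_monic (k : ℕ) : (Dp k).Monic := by
  rw [Dp, show (X + 1 : Polynomial ℚ) = X + C 1 by rw [C_1]]
  exact (monic_descPochhammer ℚ k).comp_X_add_C 1

lemma Dp_natDegree (k : ℕ) : (Dp k).natDegree = k := by
  rw [Dp, natDegree_comp, descPochhammer_natDegree]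
  simp [natDegree_X_add_C, show (X + 1 : Polynomial ℚ) = X + C 1 by rw [C_1]]

lemma Dp_eval (k m : ℕ) : (Dp k).eval (m : ℚ) = ((m + 1).descFactorial k : ℚ) := by
  rw [Dp, eval_comp]
  simp only [eval_add, eval_X, eval_one]
  rw [show ((m : ℚ) + 1) = ((m + 1 : ℕ) : ℚ) by push_cast; ring,
    descPochhammer_eval_eq_descFactorial]

lemma sum_shift (m : ℕ) :
    ∑ k ∈ Finset.range (m + 2), (m + 1).choose k * surjCount P k =
      ∑ k ∈ Finset.range (Fintype.card P + 1), (m + 1).choose k * surjCount P k := by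
  set n := Fintype.card P with hn
  have h1 : ∑ k ∈ Finset.range (m + 2), (m + 1).choose k * surjCount P k =
      ∑ k ∈ Finset.range (m + n + 2), (m + 1).choose k * surjCount P k :=
    Finset.sum_subset (Finset.range_subset_range.mpr (by omega)) (fun k hk hk2 => by
      simp only [Finset.mem_range] at hk hk2
      rw [Nat.choose_eq_zero_of_lt (by omega), zero_mul])
  have h2 : ∑ k ∈ Finset.range (n + 1), (m + 1).choose k * surjCount P k =
      ∑ k ∈ Finset.range (m + n + 2), (m + 1).choose k * surjCount P k :=
    Finset.sum_subset (Finset.range_subset_range.mpr (by omega)) (fun k hk hk2 => by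
      simp only [Finset.mem_range] at hk hk2
      rw [surjCount_eq_zero (by omega), mul_zero])
  rw [h1, ← h2]

end Aux

/-- For any finite poset `P`, the number of weakly order-preserving maps
`P → {0, 1, ..., m}` is given by a polynomial in `m` of degree `#P` whose leading
coefficient is `e(P) / #P!`, where `e(P)` is the number of linear extensions of `P`. -/
theorem order_polynomial_exists {P : Type*} [PartialOrder P] [Fintype P] :
    ∃ q : Polynomial ℚ,
      q.degree = (Fintype.card P : WithBot ℕ) ∧
      q.leadingCoeff =
        (Nat.card {f : Fin (Fintype.card P) ≃ P // IsLinExt f} : ℚ) /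
          (Nat.factorial (Fintype.card P)) ∧
      ∀ m : ℕ, q.eval (m : ℚ) = Nat.card {f : P → Fin (m + 1) // Monotone f} := by
  classical
  set n := Fintype.card P with hn
  set q : Polynomial ℚ := ∑ k ∈ Finset.range (n + 1),
    C ((surjCount P k : ℚ) / k.factorial) * Dp k with hq
  have hSn : 0 < surjCount P n := by
    rw [hn, surjCount_card]
    have := exists_linExt (P := P)
    exact Nat.card_pos
  have hcoeff : q.coeff n = (surjCount P n : ℚ) / n.factorial := by
    rw [hq, finset_sum_coeff, Finset.sum_eq_single n]
    · have h1 : (Dp n).coeff n = 1 := by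
        have h := (Dp_monic n).coeff_natDegree
        rwa [Dp_natDegree] at h
      rw [coeff_C_mul, h1, mul_one]
    · intro k hk hkn
      refine coeff_eq_zero_of_natDegree_lt ?_
      refine lt_of_le_of_lt ((natDegree_C_mul_le _ _).trans_eq (Dp_natDegree k)) ?_
      simp only [Finset.mem_range] at hk
      omega
    · intro h
      exact absurd (Finset.self_mem_range_succ n) h
  have hdegle : q.degree ≤ (n : WithBot ℕ) := by
    rw [hq]
    refine (degree_sum_le _ _).trans (Finset.sup_le fun k hk => ?_)
    refine degree_le_natDegree.trans ?_
    have hb : (C ((surjCount P k : ℚ) / k.factorial) * Dp k).natDegree ≤ n := by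
      refine (natDegree_C_mul_le _ _).trans ?_
      rw [Dp_natDegree]
      simp only [Finset.mem_range] at hk
      omega
    exact_mod_cast hb
  have hcne : q.coeff n ≠ 0 := by
    rw [hcoeff]
    exact div_ne_zero (Nat.cast_ne_zero.mpr hSn.ne') (Nat.cast_ne_zero.mpr n.factorial_ne_zero)
  have hdeg : q.degree = (n : WithBot ℕ) := degree_eq_of_le_of_coeff_ne_zero hdegle hcne
  have hnat : q.natDegree = n := natDegree_eq_of_degree_eq_some hdeg
  refine ⟨q, hdeg, ?_, ?_⟩
  · rw [Polynomial.leadingCoeff, hnat, hcoeff, hn, surjCount_card]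
  · intro m
    rw [hq, eval_finset_sum]
    simp only [eval_mul, eval_C, Dp_eval]
    have step : ∀ k, (surjCount P k : ℚ) / k.factorial * ((m + 1).descFactorial k : ℚ)
        = (((m + 1).choose k * surjCount P k : ℕ) : ℚ) := by
      intro k
      rw [Nat.descFactorial_eq_factorial_mul_choose]
      have hfac : (k.factorial : ℚ) ≠ 0 := Nat.cast_ne_zero.mpr k.factorial_ne_zero
      push_cast
      field_simp
    simp_rw [step]
    rw [← Nat.cast_sum, ← sum_shift m, ← card_monotone_eq m]
end

section
/- Evacuation on linear extensions of any finite poset P is an involution: Evac ∘ Evac is the identity on L(P). -/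
open scoped Classical

/-- `proUpTo n k = bk (k-1) ∘ ⋯ ∘ bk 1 ∘ bk 0`. -/
noncomputable def proUpTo {P : Type*} [PartialOrder P] (n : ℕ) : ℕ → (Fin n ≃ P) → (Fin n ≃ P)
  | 0, f => f
  | k + 1, f => bk n k (proUpTo n k f)

/-- Promotion: the composition `bk (n-2) ∘ ⋯ ∘ bk 1 ∘ bk 0` of all Bender–Knuth involutions. -/
noncomputable def pro {P : Type*} [PartialOrder P] (n : ℕ) (f : Fin n ≃ P) : Fin n ≃ P :=
  proUpTo n (n - 1) f

noncomputable def evacAux {P : Type*} [PartialOrder P] (n : ℕ) : ℕ → (Fin n ≃ P) → (Fin n ≃ P)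
  | 0, f => f
  | k + 1, f => evacAux n k (proUpTo n (k + 1) f)

/-- Evacuation: `(bk 0) ∘ (bk 1 ∘ bk 0) ∘ ⋯ ∘ (bk (n-2) ∘ ⋯ ∘ bk 1 ∘ bk 0)`. -/
noncomputable def evac {P : Type*} [PartialOrder P] (n : ℕ) (f : Fin n ≃ P) : Fin n ≃ P :=
  evacAux n (n - 1) f

/-! ### Auxiliary lemmas -/

section Aux

variable {P : Type*} [PartialOrder P]

lemma bk_top {n i : ℕ} (h : ¬ (i + 1 < n)) (f : Fin n ≃ P) : bk n i f = f := by
  unfold bk; rw [dif_neg h]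

lemma bk_pos {n i : ℕ} (h : i + 1 < n) (f : Fin n ≃ P)
    (hc : ¬ f ⟨i, Nat.lt_of_succ_lt h⟩ ≤ f ⟨i + 1, h⟩ ∧
          ¬ f ⟨i + 1, h⟩ ≤ f ⟨i, Nat.lt_of_succ_lt h⟩) :
    bk n i f = (Equiv.swap ⟨i, Nat.lt_of_succ_lt h⟩ ⟨i + 1, h⟩).trans f := by
  unfold bk; rw [dif_pos h, if_pos hc]

lemma bk_neg {n i : ℕ} (h : i + 1 < n) (f : Fin n ≃ P)
    (hc : ¬ (¬ f ⟨i, Nat.lt_of_succ_lt h⟩ ≤ f ⟨i + 1, h⟩ ∧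
          ¬ f ⟨i + 1, h⟩ ≤ f ⟨i, Nat.lt_of_succ_lt h⟩)) :
    bk n i f = f := by
  unfold bk; rw [dif_pos h, if_neg hc]

/-- `bk n i` is an involution (unconditionally). -/
lemma bk_bk (n i : ℕ) (f : Fin n ≃ P) : bk n i (bk n i f) = f := by
  by_cases h : i + 1 < n
  · by_cases hc : ¬ f ⟨i, Nat.lt_of_succ_lt h⟩ ≤ f ⟨i + 1, h⟩ ∧
        ¬ f ⟨i + 1, h⟩ ≤ f ⟨i, Nat.lt_of_succ_lt h⟩
    · rw [bk_pos h f hc]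
      set a : Fin n := ⟨i, Nat.lt_of_succ_lt h⟩ with ha
      set b : Fin n := ⟨i + 1, h⟩ with hb
      have ga : ((Equiv.swap a b).trans f) a = f b := by
        rw [Equiv.trans_apply, Equiv.swap_apply_left]
      have gb : ((Equiv.swap a b).trans f) b = f a := by
        rw [Equiv.trans_apply, Equiv.swap_apply_right]
      rw [bk_pos h _ ⟨by rw [← ha, ← hb, ga, gb]; exact hc.2,
          by rw [← ha, ← hb, ga, gb]; exact hc.1⟩]
      rw [← Equiv.trans_assoc, Equiv.swap_swap, Equiv.refl_trans]
    · rw [bk_neg h f hc, bk_neg h f hc]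
  · rw [bk_top h, bk_top h]

lemma swap_trans_comm {α β : Type*} [DecidableEq α] (a b c d : α) (f : α ≃ β)
    (hac : a ≠ c) (had : a ≠ d) (hbc : b ≠ c) (hbd : b ≠ d) :
    (Equiv.swap c d).trans ((Equiv.swap a b).trans f)
      = (Equiv.swap a b).trans ((Equiv.swap c d).trans f) := by
  ext x
  simp only [Equiv.trans_apply]
  have key : Equiv.swap a b (Equiv.swap c d x) = Equiv.swap c d (Equiv.swap a b x) := by
    by_cases hxa : x = a
    · subst hxa
      rw [Equiv.swap_apply_of_ne_of_ne hac had, Equiv.swap_apply_left,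
        Equiv.swap_apply_of_ne_of_ne hbc hbd]
    by_cases hxb : x = b
    · subst hxb
      rw [Equiv.swap_apply_of_ne_of_ne hbc hbd, Equiv.swap_apply_right,
        Equiv.swap_apply_of_ne_of_ne hac had]
    by_cases hxc : x = c
    · subst hxc
      rw [Equiv.swap_apply_left, Equiv.swap_apply_of_ne_of_ne hac.symm hbc.symm,
        Equiv.swap_apply_of_ne_of_ne had.symm hbd.symm, Equiv.swap_apply_left]
    by_cases hxd : x = d
    · subst hxd
      rw [Equiv.swap_apply_right, Equiv.swap_apply_of_ne_of_ne hac.symm hbc.symm,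
        Equiv.swap_apply_of_ne_of_ne had.symm hbd.symm, Equiv.swap_apply_right]
    · rw [Equiv.swap_apply_of_ne_of_ne hxc hxd, Equiv.swap_apply_of_ne_of_ne hxa hxb,
        Equiv.swap_apply_of_ne_of_ne hxc hxd]
  rw [key]

/-- Far-apart Bender–Knuth involutions commute. -/
lemma bk_comm {n i j : ℕ} (h : i + 2 ≤ j) (f : Fin n ≃ P) :
    bk n j (bk n i f) = bk n i (bk n j f) := by
  by_cases hj : j + 1 < n
  · have hi : i + 1 < n := by omega
    have hca : (⟨j, Nat.lt_of_succ_lt hj⟩ : Fin n) ≠ ⟨i, Nat.lt_of_succ_lt hi⟩ := by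
      simp [Fin.ext_iff]; omega
    have hcb : (⟨j, Nat.lt_of_succ_lt hj⟩ : Fin n) ≠ ⟨i + 1, hi⟩ := by
      simp [Fin.ext_iff]; omega
    have hda : (⟨j + 1, hj⟩ : Fin n) ≠ ⟨i, Nat.lt_of_succ_lt hi⟩ := by
      simp [Fin.ext_iff]; omega
    have hdb : (⟨j + 1, hj⟩ : Fin n) ≠ ⟨i + 1, hi⟩ := by
      simp [Fin.ext_iff]; omega
    by_cases hci : ¬ f ⟨i, Nat.lt_of_succ_lt hi⟩ ≤ f ⟨i + 1, hi⟩ ∧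
        ¬ f ⟨i + 1, hi⟩ ≤ f ⟨i, Nat.lt_of_succ_lt hi⟩
    · have gc : ((Equiv.swap (⟨i, Nat.lt_of_succ_lt hi⟩ : Fin n) ⟨i + 1, hi⟩).trans f)
          ⟨j, Nat.lt_of_succ_lt hj⟩ = f ⟨j, Nat.lt_of_succ_lt hj⟩ := by
        rw [Equiv.trans_apply, Equiv.swap_apply_of_ne_of_ne hca hcb]
      have gd : ((Equiv.swap (⟨i, Nat.lt_of_succ_lt hi⟩ : Fin n) ⟨i + 1, hi⟩).trans f)
          ⟨j + 1, hj⟩ = f ⟨j + 1, hj⟩ := by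
        rw [Equiv.trans_apply, Equiv.swap_apply_of_ne_of_ne hda hdb]
      by_cases hcj : ¬ f ⟨j, Nat.lt_of_succ_lt hj⟩ ≤ f ⟨j + 1, hj⟩ ∧
          ¬ f ⟨j + 1, hj⟩ ≤ f ⟨j, Nat.lt_of_succ_lt hj⟩
      · have ga : ((Equiv.swap (⟨j, Nat.lt_of_succ_lt hj⟩ : Fin n) ⟨j + 1, hj⟩).trans f)
            ⟨i, Nat.lt_of_succ_lt hi⟩ = f ⟨i, Nat.lt_of_succ_lt hi⟩ := by
          rw [Equiv.trans_apply, Equiv.swap_apply_of_ne_of_ne hca.symm hda.symm]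
        have gb : ((Equiv.swap (⟨j, Nat.lt_of_succ_lt hj⟩ : Fin n) ⟨j + 1, hj⟩).trans f)
            ⟨i + 1, hi⟩ = f ⟨i + 1, hi⟩ := by
          rw [Equiv.trans_apply, Equiv.swap_apply_of_ne_of_ne hcb.symm hdb.symm]
        rw [bk_pos hi f hci, bk_pos hj f hcj,
          bk_pos hj _ ⟨by rw [gc, gd]; exact hcj.1, by rw [gc, gd]; exact hcj.2⟩,
          bk_pos hi _ ⟨by rw [ga, gb]; exact hci.1, by rw [ga, gb]; exact hci.2⟩]
        exact swap_trans_comm _ _ _ _ f hca.symm hda.symm hcb.symm hdb.symm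
      · rw [bk_neg hj f hcj, bk_pos hi f hci,
          bk_neg hj _ (by rw [gc, gd]; exact hcj)]
    · by_cases hcj : ¬ f ⟨j, Nat.lt_of_succ_lt hj⟩ ≤ f ⟨j + 1, hj⟩ ∧
          ¬ f ⟨j + 1, hj⟩ ≤ f ⟨j, Nat.lt_of_succ_lt hj⟩
      · have ga : ((Equiv.swap (⟨j, Nat.lt_of_succ_lt hj⟩ : Fin n) ⟨j + 1, hj⟩).trans f)
            ⟨i, Nat.lt_of_succ_lt hi⟩ = f ⟨i, Nat.lt_of_succ_lt hi⟩ := by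
          rw [Equiv.trans_apply, Equiv.swap_apply_of_ne_of_ne hca.symm hda.symm]
        have gb : ((Equiv.swap (⟨j, Nat.lt_of_succ_lt hj⟩ : Fin n) ⟨j + 1, hj⟩).trans f)
            ⟨i + 1, hi⟩ = f ⟨i + 1, hi⟩ := by
          rw [Equiv.trans_apply, Equiv.swap_apply_of_ne_of_ne hcb.symm hdb.symm]
        rw [bk_neg hi f hci, bk_pos hj f hcj,
          bk_neg hi _ (by rw [ga, gb]; exact hci)]
      · rw [bk_neg hi f hci, bk_neg hj f hcj, bk_neg hi f hci]
  · rw [bk_top hj, bk_top hj]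

/-- `revUpTo n k = bk 0 ∘ bk 1 ∘ ⋯ ∘ bk (k-1)`: the reverse word. -/
noncomputable def revUpTo (n : ℕ) : ℕ → (Fin n ≃ P) → (Fin n ≃ P)
  | 0, f => f
  | k + 1, f => revUpTo n k (bk n k f)

lemma revUpTo_proUpTo (n k : ℕ) (f : Fin n ≃ P) :
    revUpTo n k (proUpTo n k f) = f := by
  induction k generalizing f with
  | zero => rfl
  | succ k ih =>
    show revUpTo n k (bk n k (bk n k (proUpTo n k f))) = f
    rw [bk_bk]; exact ih f

lemma proUpTo_revUpTo (n k : ℕ) (f : Fin n ≃ P) :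
    proUpTo n k (revUpTo n k f) = f := by
  induction k generalizing f with
  | zero => rfl
  | succ k ih =>
    show bk n k (proUpTo n k (revUpTo n k (bk n k f))) = f
    rw [ih, bk_bk]

lemma bk_proUpTo_comm {n j k : ℕ} (h : k + 1 ≤ j) (f : Fin n ≃ P) :
    bk n j (proUpTo n k f) = proUpTo n k (bk n j f) := by
  induction k generalizing f with
  | zero => rfl
  | succ k ih =>
    show bk n j (bk n k (proUpTo n k f)) = bk n k (proUpTo n k (bk n j f))
    rw [bk_comm (show k + 2 ≤ j by omega), ih (by omega)]

lemma bk_evacAux_comm {n j k : ℕ} (h : k < j) (f : Fin n ≃ P) :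
    bk n j (evacAux n k f) = evacAux n k (bk n j f) := by
  induction k generalizing f with
  | zero => rfl
  | succ k ih =>
    show bk n j (evacAux n k (proUpTo n (k + 1) f))
        = evacAux n k (proUpTo n (k + 1) (bk n j f))
    rw [ih (by omega), bk_proUpTo_comm (show k + 1 + 1 ≤ j by omega)]

lemma key_lemma (n k : ℕ) (f : Fin n ≃ P) :
    proUpTo n (k + 1) (evacAux n k f) = evacAux n k (revUpTo n (k + 1) f) := by
  induction k generalizing f with
  | zero => rfl
  | succ k ih =>
    show bk n (k + 1) (proUpTo n (k + 1) (evacAux n k (proUpTo n (k + 1) f)))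
        = evacAux n k (proUpTo n (k + 1) (revUpTo n (k + 1) (bk n (k + 1) f)))
    rw [ih, revUpTo_proUpTo, proUpTo_revUpTo,
      bk_evacAux_comm (show k < k + 1 by omega)]

lemma evacAux_invol (n k : ℕ) (f : Fin n ≃ P) :
    evacAux n k (evacAux n k f) = f := by
  induction k generalizing f with
  | zero => rfl
  | succ k ih =>
    show evacAux n k (proUpTo n (k + 1) (evacAux n k (proUpTo n (k + 1) f))) = f
    rw [key_lemma, revUpTo_proUpTo, ih]

end Aux

/-- Evacuation on linear extensions of any finite poset is an involution. -/
theorem evac_involutive {P : Type*} [PartialOrder P] (n : ℕ)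
    (f : Fin n ≃ P) (hf : IsLinExt f) :
    evac n (evac n f) = f := by
  unfold evac
  exact evacAux_invol n (n - 1) f
end

section
/- If G is a group generated by involutions t_0, t_1, ..., t_r such that t_i and t_j commute whenever |i-j| ≥ 2, and we set P := t_0 t_1 ⋯ t_r and E := (t_r)(t_{r-1} t_r)⋯(t_0 t_1 ⋯ t_r), then E is an involution and E P = P⁻¹ E. -/
/-- `seg r t i = t i * t (i+1) * ⋯ * t r`. -/
def seg {G : Type*} [Group G] (r : ℕ) (t : ℕ → G) (i : ℕ) : G :=
  ((List.range (r + 1 - i)).map (fun k => t (i + k))).prod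

/-- `P = t 0 * t 1 * ⋯ * t r`. -/
def proG {G : Type*} [Group G] (r : ℕ) (t : ℕ → G) : G :=
  seg r t 0

/-- `E = (t r) * (t (r-1) * t r) * ⋯ * (t 0 * t 1 * ⋯ * t r)`. -/
def evacG {G : Type*} [Group G] (r : ℕ) (t : ℕ → G) : G :=
  ((List.range (r + 1)).map (fun j => seg r t (r - j))).prod

namespace EvacAux

variable {G : Type*} [Group G]

/-- shift of a sequence -/
def shf (t : ℕ → G) : ℕ → G := fun k => t (k + 1)

lemma seg_shf (r i : ℕ) (t : ℕ → G) : seg (r + 1) t (i + 1) = seg r (shf t) i := by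
  unfold seg shf
  rw [Nat.succ_sub_succ]
  have h : ∀ k : ℕ, i + 1 + k = i + k + 1 := fun k => by omega
  simp only [h]

lemma pro_zero (t : ℕ → G) : proG 0 t = t 0 := by
  simp [proG, seg, List.range_succ]

lemma evac_zero (t : ℕ → G) : evacG 0 t = t 0 := by
  simp [evacG, seg, List.range_succ]

lemma pro_succ (r : ℕ) (t : ℕ → G) : proG (r + 1) t = t 0 * proG r (shf t) := by
  unfold proG seg shf
  simp only [Nat.sub_zero, Nat.zero_add]
  rw [List.range_succ_eq_map]
  simp [List.map_map, Function.comp_def, Nat.succ_eq_add_one]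

lemma evac_succ (r : ℕ) (t : ℕ → G) :
    evacG (r + 1) t = evacG r (shf t) * proG (r + 1) t := by
  unfold evacG
  rw [List.range_succ, List.map_append, List.prod_append]
  congr 1
  · congr 1
    apply List.map_congr_left
    intro j hj
    rw [List.mem_range] at hj
    have h1 : r + 1 - j = (r - j) + 1 := by omega
    rw [h1, seg_shf]
  · simp [proG]

lemma commute_seg {x : G} {r : ℕ} {u : ℕ → G} (h : ∀ j ≤ r, Commute x (u j)) (i : ℕ) :
    Commute x (seg r u i) := by
  unfold seg
  apply Commute.list_prod_right
  intro y hy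
  simp only [List.mem_map, List.mem_range] at hy
  obtain ⟨k, hk, rfl⟩ := hy
  exact h _ (by omega)

lemma commute_evac {x : G} {r : ℕ} {u : ℕ → G} (h : ∀ j ≤ r, Commute x (u j)) :
    Commute x (evacG r u) := by
  unfold evacG
  apply Commute.list_prod_right
  intro y hy
  simp only [List.mem_map, List.mem_range] at hy
  obtain ⟨j, hj, rfl⟩ := hy
  exact commute_seg h _

lemma step {F P : G} (h1 : F * F = 1) (h2 : F * P * F = P⁻¹) :
    (F * P) * (F * P) = 1 ∧ (F * P) * P * (F * P) = P⁻¹ := by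
  have hFinv : F⁻¹ = F := inv_eq_of_mul_eq_one_right h1
  have hPF : P * F = F * P⁻¹ := by
    calc P * F = F⁻¹ * (F * P * F) := by group
      _ = F * P⁻¹ := by rw [h2, hFinv]
  constructor
  · calc F * P * (F * P) = (F * P * F) * P := by group
      _ = P⁻¹ * P := by rw [h2]
      _ = 1 := by group
  · calc F * P * P * (F * P) = F * P * (P * F) * P := by group
      _ = F * P * (F * P⁻¹) * P := by rw [hPF]
      _ = F * P * F := by group
      _ = P⁻¹ := h2

lemma main (r : ℕ) : ∀ t : ℕ → G,
    (∀ i ≤ r, t i * t i = 1) →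
    (∀ i j, i ≤ r → j ≤ r → i + 2 ≤ j → t i * t j = t j * t i) →
    (evacG r t * evacG r t = 1 ∧
     evacG r t * proG r t * evacG r t = (proG r t)⁻¹) ∧
    (∀ r', r = r' + 1 →
      evacG r' (shf t) * proG r t * evacG r' (shf t) = (proG r t)⁻¹) := by
  induction r with
  | zero =>
    intro t hinv _
    have h0 := hinv 0 le_rfl
    have h0' : (t 0)⁻¹ = t 0 := inv_eq_of_mul_eq_one_right h0
    refine ⟨⟨?_, ?_⟩, ?_⟩
    · rw [evac_zero, h0]
    · rw [evac_zero, pro_zero, h0', h0, one_mul]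
    · intro r' hr'; omega
  | succ r ih =>
    intro t hinv hcomm
    have hinvs : ∀ i ≤ r, shf t i * shf t i = 1 := fun i hi => hinv (i + 1) (by omega)
    have hcomms : ∀ i j, i ≤ r → j ≤ r → i + 2 ≤ j → shf t i * shf t j = shf t j * shf t i :=
      fun i j hi hj hij => hcomm (i + 1) (j + 1) (by omega) (by omega) (by omega)
    obtain ⟨⟨As, Bs⟩, Cs⟩ := ih (shf t) hinvs hcomms
    set F := evacG r (shf t) with hF
    set P₁ := proG r (shf t) with hP₁
    have h0 := hinv 0 (by omega)
    have h0' : (t 0)⁻¹ = t 0 := inv_eq_of_mul_eq_one_right h0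
    -- key commuting-conjugation step
    have key : F * t 0 * F = P₁⁻¹ * (t 0 * P₁) := by
      cases r with
      | zero =>
        rw [hF, hP₁, evac_zero, pro_zero]
        have h1' : (shf t 0)⁻¹ = shf t 0 := inv_eq_of_mul_eq_one_right (hinvs 0 le_rfl)
        rw [h1']
        group
      | succ r'' =>
        have hdec : F = evacG r'' (shf (shf t)) * P₁ := evac_succ r'' (shf t)
        have hC := Cs r'' rfl
        have hcom : Commute (t 0) (evacG r'' (shf (shf t))) := by
          apply commute_evac
          intro j hj
          exact hcomm 0 (j + 1 + 1) (by omega) (by omega) (by omega)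
        set F₁ := evacG r'' (shf (shf t)) with hF₁
        calc F * t 0 * F = F₁ * P₁ * t 0 * (F₁ * P₁) := by rw [hdec]
          _ = F₁ * P₁ * (t 0 * F₁) * P₁ := by group
          _ = F₁ * P₁ * (F₁ * t 0) * P₁ := by rw [hcom.eq]
          _ = (F₁ * P₁ * F₁) * (t 0 * P₁) := by group
          _ = P₁⁻¹ * (t 0 * P₁) := by rw [hC]
    -- the C clause at level r + 1
    have hC1 : F * proG (r + 1) t * F = (proG (r + 1) t)⁻¹ := by
      rw [pro_succ, ← hP₁]
      have h2 : F * (t 0 * P₁) * F = (F * t 0 * F) * (F * P₁ * F) := by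
        have h3 : (F * t 0 * F) * (F * P₁ * F) = F * t 0 * (F * F) * P₁ * F := by group
        rw [h3, As]
        group
      calc F * (t 0 * P₁) * F
          = (F * t 0 * F) * (F * P₁ * F) := h2
        _ = (P₁⁻¹ * (t 0 * P₁)) * P₁⁻¹ := by rw [key, Bs]
        _ = P₁⁻¹ * t 0 := by group
        _ = (t 0 * P₁)⁻¹ := by rw [mul_inv_rev, h0']
    have hE : evacG (r + 1) t = F * proG (r + 1) t := evac_succ r t
    obtain ⟨hA, hB⟩ := step As hC1
    refine ⟨⟨?_, ?_⟩, ?_⟩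
    · rw [hE]; exact hA
    · rw [hE]; exact hB
    · intro r' hr'
      have : r' = r := by omega
      subst this
      exact hC1

end EvacAux

/-- If a group `G` is generated by involutions `t 0, ..., t r` with `t i` and `t j`
commuting whenever `|i - j| ≥ 2`, then `E` is an involution and `E * P = P⁻¹ * E`. -/
theorem evacG_involutive_and_conjugates {G : Type*} [Group G] (r : ℕ) (t : ℕ → G)
    (hgen : Subgroup.closure (t '' {i | i ≤ r}) = ⊤)
    (hinv : ∀ i ≤ r, t i * t i = 1)
    (hcomm : ∀ i j, i ≤ r → j ≤ r → i + 2 ≤ j → t i * t j = t j * t i) :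
    evacG r t * evacG r t = 1 ∧
    evacG r t * proG r t = (proG r t)⁻¹ * evacG r t := by
  obtain ⟨⟨hA, hB⟩, -⟩ := EvacAux.main r t hinv hcomm
  refine ⟨hA, ?_⟩
  calc evacG r t * proG r t
      = (evacG r t * proG r t * evacG r t) * evacG r t * (evacG r t * evacG r t)⁻¹ := by group
    _ = (proG r t)⁻¹ * evacG r t * (evacG r t * evacG r t)⁻¹ := by rw [hB]
    _ = (proG r t)⁻¹ * evacG r t := by rw [hA]; group
end

section
/- For any finite graded poset P, rowvacuation is an involution on P-partitions of height m, and Rvac ∘ Row = Row⁻¹ ∘ Rvac, and Row^{r(P)+2} = Rvac* ∘ Rvac. -/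
open scoped Classical

/-- A `P`-partition of height `m`: a weakly order-preserving map `P → {0, ..., m}`. -/
def IsPPart {P : Type*} [PartialOrder P] (m : ℕ) (f : P → ℕ) : Prop :=
  (∀ p, f p ≤ m) ∧ Monotone f

/-- The new value of the piecewise-linear toggle at `p`:
`min{π(r) : p ⋖ r} + max{π(r) : r ⋖ p} − π(p)`, with `min ∅ = m` and `max ∅ = 0`. -/
noncomputable def togVal {P : Type*} [PartialOrder P] [Fintype P]
    (m : ℕ) (f : P → ℕ) (p : P) : ℕ :=
  (insert m ((Finset.univ.filter fun r => p ⋖ r).image f)).min'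
      (Finset.insert_nonempty _ _) +
    (insert 0 ((Finset.univ.filter fun r => r ⋖ p).image f)).max'
      (Finset.insert_nonempty _ _) -
    f p

/-- The piecewise-linear toggle `τ_p` on `P`-partitions of height `m`. -/
noncomputable def tog {P : Type*} [PartialOrder P] [Fintype P]
    (m : ℕ) (p : P) (f : P → ℕ) : P → ℕ :=
  fun q => if q = p then togVal m f p else f q

/-- The rank toggle `τ_i`: simultaneously (equivalently, in any order) toggle all elements
of rank `i`. -/
noncomputable def rankTog {P : Type*} [PartialOrder P] [Fintype P]
    (rk : P → ℕ) (m i : ℕ) (f : P → ℕ) : P → ℕ :=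
  fun q => if rk q = i then togVal m f q else f q

/-- `rowFrom rk m r j = τ_{r-j} ∘ τ_{r-j+1} ∘ ⋯ ∘ τ_r` (rank toggles, top rank first). -/
noncomputable def rowFrom {P : Type*} [PartialOrder P] [Fintype P]
    (rk : P → ℕ) (m r : ℕ) : ℕ → (P → ℕ) → (P → ℕ)
  | 0, f => rankTog rk m r f
  | j + 1, f => rankTog rk m (r - (j + 1)) (rowFrom rk m r j f)

/-- Rowmotion `Row = τ_0 ∘ τ_1 ∘ ⋯ ∘ τ_r` on `P`-partitions of height `m`, for a graded
poset with rank function `rk` and top rank `r`. -/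
noncomputable def rowm {P : Type*} [PartialOrder P] [Fintype P]
    (rk : P → ℕ) (m r : ℕ) (f : P → ℕ) : P → ℕ :=
  rowFrom rk m r r f

noncomputable def rvacAux {P : Type*} [PartialOrder P] [Fintype P]
    (rk : P → ℕ) (m r : ℕ) : ℕ → (P → ℕ) → (P → ℕ)
  | 0, f => rowFrom rk m r 0 f
  | j + 1, f => rvacAux rk m r j (rowFrom rk m r (j + 1) f)

/-- Rowvacuation `Rvac = (τ_r) ∘ (τ_{r-1} ∘ τ_r) ∘ ⋯ ∘ (τ_0 ∘ ⋯ ∘ τ_{r-1} ∘ τ_r)`. -/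
noncomputable def rvac {P : Type*} [PartialOrder P] [Fintype P]
    (rk : P → ℕ) (m r : ℕ) (f : P → ℕ) : P → ℕ :=
  rvacAux rk m r r f

/-- Dual rowvacuation `Rvac*(π) = (Rvac(π*))*`, where `π*(p) = m − π(p)` is a
`P*`-partition of the dual poset (whose rank function is `p ↦ r − rk p`). -/
noncomputable def rvacStar {P : Type*} [PartialOrder P] [Fintype P]
    (rk : P → ℕ) (m r : ℕ) (f : P → ℕ) : P → ℕ :=
  fun p => m -
    rvac (P := Pᵒᵈ) (fun q => r - rk (OrderDual.ofDual q)) m r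
      (fun q => m - f (OrderDual.ofDual q)) (OrderDual.toDual p)

/-!
Only two properties of the rank toggles `τ_i` on `P`-partitions matter: each is an involution,
and `τ_i`, `τ_j` commute when `|i - j| ≥ 2`, because covers change the rank by exactly one.
In any group generated by such `t_0, …, t_r`, put `W = t_0 ⋯ t_r`. The `Rvac` word of
`t_1, …, t_r` conjugates `W` to `W⁻¹`; splitting off the last factor of `Rvac` gives
`Rvac² = 1` and `W Rvac W = Rvac`. Commuting letters of successive copies of `W` past each other
turns `W ^ (r + 2)` into `Rvac* Rvac`, where `Rvac*` is the `Rvac` word of the reversed generators.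
Finally, complementation `π ↦ π*` conjugates `τ_i` on `P` to `τ_{r-i}` on `P*`, so the concrete
`Rvac*` is that reversed word.
-/

section Words

variable {G : Type*} [Group G] (t : ℕ → G)

def rowWord (a : ℕ) : ℕ → G
  | 0 => 1
  | n + 1 => t a * rowWord (a + 1) n

/-- With `W b k := rowWord t b k = t b * ⋯ * t (b + k - 1)`, this is
`W (a + n - 1) 1 * W (a + n - 2) 2 * ⋯ * W a n`; for `a = 0`, `n = r + 1`, `t = τ` it is `Rvac`. -/
def rvacWord (a : ℕ) : ℕ → G
  | 0 => 1
  | n + 1 => rvacWord (a + 1) n * rowWord t a (n + 1)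

/-- `(W a 1)⁻¹ * (W a 2)⁻¹ * ⋯ * (W a n)⁻¹`: the word `rvacWord` in the reversed generators
`t (a + n - 1), …, t a` when these are involutions (`rvacWord_reverse`). -/
def rvacDualWord (a : ℕ) : ℕ → G
  | 0 => 1
  | n + 1 => rvacDualWord a n * (rowWord t a (n + 1))⁻¹

theorem rowWord_add (a k l : ℕ) :
    rowWord t a (k + l) = rowWord t a k * rowWord t (a + k) l := by
  induction k generalizing a with
  | zero => simp [rowWord]
  | succ k ih =>
    rw [Nat.add_right_comm, rowWord, ih, rowWord, mul_assoc, Nat.add_right_comm, add_assoc]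

theorem rowWord_succ' (a n : ℕ) : rowWord t a (n + 1) = rowWord t a n * t (a + n) := by
  rw [rowWord_add, rowWord, rowWord, mul_one]

theorem map_rowWord {H F : Type*} [Group H] [FunLike F G H] [MonoidHomClass F G H] (φ : F)
    (a n : ℕ) : φ (rowWord t a n) = rowWord (fun i => φ (t i)) a n := by
  induction n generalizing a with
  | zero => exact map_one φ
  | succ n ih => rw [rowWord, rowWord, map_mul, ih]

theorem map_rvacDualWord {H F : Type*} [Group H] [FunLike F G H] [MonoidHomClass F G H] (φ : F)
    (a n : ℕ) : φ (rvacDualWord t a n) = rvacDualWord (fun i => φ (t i)) a n := by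
  induction n with
  | zero => exact map_one φ
  | succ n ih => rw [rvacDualWord, rvacDualWord, map_mul, map_inv, ih, map_rowWord]

variable {t}

section Reverse

variable {s : ℕ → G} {r : ℕ} (hinv : ∀ i, (t i)⁻¹ = t i) (hs : ∀ i ≤ r, s i = t (r - i))
include hinv hs

theorem rowWord_reverse {a n : ℕ} (h : a + n ≤ r + 1) :
    rowWord s a n = (rowWord t (r + 1 - a - n) n)⁻¹ := by
  induction n generalizing a with
  | zero => simp [rowWord]
  | succ n ih =>
    rw [rowWord, ih (by omega), hs a (by omega), show r + 1 - a - (n + 1) = r - a - n by omega,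
      rowWord_succ', show r - a - n + n = r - a by omega,
      show r + 1 - (a + 1) - n = r - a - n by omega, mul_inv_rev, hinv]

theorem rvacWord_reverse {a n : ℕ} (h : a + n ≤ r + 1) :
    rvacWord s a n = rvacDualWord t (r + 1 - a - n) n := by
  induction n generalizing a with
  | zero => rfl
  | succ n ih =>
    rw [rvacWord, ih (by omega), rowWord_reverse hinv hs h, rvacDualWord,
      show r + 1 - (a + 1) - n = r + 1 - a - (n + 1) by omega]

end Reverse

theorem Commute.rowWord_right {x : G} {a n : ℕ}
    (h : ∀ i, a ≤ i → i < a + n → Commute x (t i)) : Commute x (rowWord t a n) := by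
  induction n generalizing a with
  | zero => exact Commute.one_right x
  | succ n ih =>
    exact (h a le_rfl (by omega)).mul_right (ih fun i hi hi' => h i (by omega) (by omega))

theorem Commute.rvacWord_right {x : G} {a n : ℕ}
    (h : ∀ i, a ≤ i → i < a + n → Commute x (t i)) : Commute x (rvacWord t a n) := by
  induction n generalizing a with
  | zero => exact Commute.one_right x
  | succ n ih =>
    exact (ih fun i hi hi' => h i (by omega) (by omega)).mul_right
      (Commute.rowWord_right fun i hi hi' => h i hi (by omega))

section Relations

variable (hinv : ∀ i, (t i)⁻¹ = t i) (hcomm : ∀ i j, i + 2 ≤ j → Commute (t i) (t j))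
include hinv hcomm

theorem rowWord_mul_rvacWord (a n : ℕ) :
    rowWord t a (n + 1) * rvacWord t (a + 1) n =
      rvacWord t (a + 1) n * (rowWord t a (n + 1))⁻¹ := by
  induction n generalizing a with
  | zero => simp [rowWord, rvacWord, hinv]
  | succ n ih =>
    have hc : Commute (t a) (rvacWord t (a + 2) n) :=
      Commute.rvacWord_right fun i hi _ => hcomm a i hi
    calc rowWord t a (n + 2) * rvacWord t (a + 1) (n + 1)
        = t a * (rowWord t (a + 1) (n + 1) * rvacWord t (a + 2) n) *
            rowWord t (a + 1) (n + 1) := by simp only [rowWord, rvacWord]; group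
      _ = t a * rvacWord t (a + 2) n := by rw [ih]; group
      _ = rvacWord t (a + 2) n * (t a)⁻¹ := by rw [hc.eq, hinv]
      _ = rvacWord t (a + 1) (n + 1) * (rowWord t a (n + 2))⁻¹ := by
        simp only [rowWord, rvacWord]; group

theorem rvacWord_mul_self (a n : ℕ) : rvacWord t a n * rvacWord t a n = 1 := by
  induction n generalizing a with
  | zero => simp [rvacWord]
  | succ n ih =>
    calc rvacWord t a (n + 1) * rvacWord t a (n + 1)
        = rvacWord t (a + 1) n * (rowWord t a (n + 1) * rvacWord t (a + 1) n) *
            rowWord t a (n + 1) := by simp only [rvacWord]; group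
      _ = rvacWord t (a + 1) n * rvacWord t (a + 1) n := by
        rw [rowWord_mul_rvacWord hinv hcomm]; group
      _ = 1 := ih (a + 1)

theorem rowWord_mul_rvacWord_mul_rowWord (a n : ℕ) :
    rowWord t a (n + 1) * rvacWord t a (n + 1) * rowWord t a (n + 1) =
      rvacWord t a (n + 1) := by
  simp only [rvacWord]
  rw [← mul_assoc, rowWord_mul_rvacWord hinv hcomm]
  group

theorem rowWord_pow_mul_rvacWord {a n j : ℕ} (hj : j ≤ n) :
    rowWord t a (n + 1) ^ j * rvacWord t (a + 1) n =
      rvacDualWord t a j * rvacWord t (a + j + 1) (n - j) := by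
  induction j with
  | zero => simp [rvacDualWord]
  | succ j ih =>
    have hsplit :
        rowWord t a (n + 1) = rowWord t a (j + 1) * rowWord t (a + j + 1) (n - j) := by
      rw [show a + j + 1 = a + (j + 1) from rfl, ← rowWord_add]; congr 1; omega
    have htail : rvacWord t (a + j + 1) (n - j) =
        rvacWord t (a + (j + 1) + 1) (n - (j + 1)) * rowWord t (a + j + 1) (n - j) := by
      rw [show n - j = n - (j + 1) + 1 by omega, rvacWord]; rfl
    have hc : Commute (rowWord t a (j + 1)) (rvacWord t (a + (j + 1) + 1) (n - (j + 1))) :=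
      Commute.rvacWord_right fun i hi _ =>
        (Commute.rowWord_right fun k _ hk => (hcomm k i (by omega)).symm).symm
    calc rowWord t a (n + 1) ^ (j + 1) * rvacWord t (a + 1) n
        = rowWord t a (n + 1) ^ j * rvacWord t (a + 1) n * (rowWord t a (n + 1))⁻¹ := by
          rw [pow_succ, mul_assoc, rowWord_mul_rvacWord hinv hcomm, mul_assoc]
      _ = rvacDualWord t a j * (rvacWord t (a + (j + 1) + 1) (n - (j + 1)) *
            (rowWord t a (j + 1))⁻¹) := by
          rw [ih (by omega), htail, hsplit]; group
      _ = rvacDualWord t a (j + 1) * rvacWord t (a + (j + 1) + 1) (n - (j + 1)) := by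
          rw [← hc.inv_left.eq, rvacDualWord]; group

theorem rowWord_pow_eq_rvacDualWord_mul_rvacWord (a n : ℕ) :
    rowWord t a (n + 1) ^ (n + 2) = rvacDualWord t a (n + 1) * rvacWord t a (n + 1) := by
  set W := rowWord t a (n + 1)
  set E := rvacWord t (a + 1) n
  have hpow : W ^ n = rvacDualWord t a n * E := by
    have h := rowWord_pow_mul_rvacWord hinv hcomm (a := a) (le_refl n)
    rw [Nat.sub_self, rvacWord, mul_one] at h
    rw [← h, mul_assoc, rvacWord_mul_self hinv hcomm, mul_one]
  have hswap : E * W = W⁻¹ * E :=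
    eq_inv_mul_of_mul_eq <| by
      rw [← mul_assoc, rowWord_mul_rvacWord hinv hcomm, inv_mul_cancel_right]
  calc W ^ (n + 2) = rvacDualWord t a n * (E * W) * W := by
        rw [pow_succ, pow_succ, hpow]; group
    _ = rvacDualWord t a n * W⁻¹ * (E * W) := by nth_rw 1 [hswap]; simp only [mul_assoc]

end Relations

end Words

theorem Antitone.map_finset_max' {α β : Type*} [LinearOrder α] [LinearOrder β] {f : α → β}
    (hf : Antitone f) {s : Finset α} (h : s.Nonempty) :
    f (s.max' h) = (s.image f).min' (h.image f) :=
  le_antisymm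
    (Finset.le_min' _ _ _ fun _ hy => by
      obtain ⟨x, hx, rfl⟩ := Finset.mem_image.mp hy
      exact hf (Finset.le_max' _ _ hx))
    (Finset.min'_le _ _ (Finset.mem_image_of_mem f (Finset.max'_mem _ _)))

theorem Antitone.map_finset_min' {α β : Type*} [LinearOrder α] [LinearOrder β] {f : α → β}
    (hf : Antitone f) {s : Finset α} (h : s.Nonempty) :
    f (s.min' h) = (s.image f).max' (h.image f) :=
  le_antisymm
    (Finset.le_max' _ _ (Finset.mem_image_of_mem f (Finset.min'_mem _ _)))
    (Finset.max'_le _ _ _ fun _ hy => by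
      obtain ⟨x, hx, rfl⟩ := Finset.mem_image.mp hy
      exact hf (Finset.min'_le _ _ hx))

section Toggles

variable {P : Type*} [PartialOrder P] [Fintype P]

theorem monotone_of_covBy {β : Type*} [Preorder β] {g : P → β}
    (h : ∀ a b : P, a ⋖ b → g a ≤ g b) : Monotone g :=
  letI := Fintype.toLocallyFiniteOrder (α := P)
  (monotone_iff_forall_covBy g).2 h

theorem rank_le_top {rk : P → ℕ} {r : ℕ} (hcov : ∀ p q : P, p ⋖ q → rk q = rk p + 1)
    (hmax : ∀ p : P, IsMax p → rk p = r) (p : P) : rk p ≤ r := by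
  obtain ⟨b, hpb, hb⟩ := Finite.exists_le_maximal (p := fun _ : P => True) trivial
  rw [← hmax b fun c hc => hb.2 trivial hc]
  exact monotone_of_covBy (fun a b h => (hcov a b h).symm ▸ Nat.le_succ _) hpb

section Neighbours

variable (m : ℕ) (f : P → ℕ)

noncomputable def upMin (p : P) : ℕ :=
  (insert m ((Finset.univ.filter fun r => p ⋖ r).image f)).min' (Finset.insert_nonempty _ _)

noncomputable def downMax (p : P) : ℕ :=
  (insert 0 ((Finset.univ.filter fun r => r ⋖ p).image f)).max' (Finset.insert_nonempty _ _)

theorem togVal_eq (p : P) : togVal m f p = upMin m f p + downMax f p - f p := rfl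

theorem upMin_le (p : P) : upMin m f p ≤ m :=
  Finset.min'_le _ _ (Finset.mem_insert_self _ _)

variable {m f}

theorem upMin_le_of_covBy {p q : P} (h : p ⋖ q) : upMin m f p ≤ f q :=
  Finset.min'_le _ _ (Finset.mem_insert_of_mem (Finset.mem_image_of_mem f (by simpa using h)))

theorem le_downMax_of_covBy {p q : P} (h : q ⋖ p) : f q ≤ downMax f p :=
  Finset.le_max' _ _ (Finset.mem_insert_of_mem (Finset.mem_image_of_mem f (by simpa using h)))

theorem IsPPart.le_upMin (hf : IsPPart m f) (p : P) : f p ≤ upMin m f p := by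
  refine Finset.le_min' _ _ _ fun y hy => ?_
  rcases Finset.mem_insert.mp hy with rfl | hy
  · exact hf.1 p
  · obtain ⟨x, hx, rfl⟩ := Finset.mem_image.mp hy
    exact hf.2 (Finset.mem_filter.mp hx).2.le

theorem IsPPart.downMax_le (hf : IsPPart m f) (p : P) : downMax f p ≤ f p := by
  refine Finset.max'_le _ _ _ fun y hy => ?_
  rcases Finset.mem_insert.mp hy with rfl | hy
  · exact Nat.zero_le _
  · obtain ⟨x, hx, rfl⟩ := Finset.mem_image.mp hy
    exact hf.2 (Finset.mem_filter.mp hx).2.le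

theorem upMin_congr {g : P → ℕ} {p : P} (h : ∀ q, p ⋖ q → f q = g q) :
    upMin m f p = upMin m g p := by
  unfold upMin
  congr 2
  exact Finset.image_congr fun q hq => h q (Finset.mem_filter.mp hq).2

theorem downMax_congr {g : P → ℕ} {p : P} (h : ∀ q, q ⋖ p → f q = g q) :
    downMax f p = downMax g p := by
  unfold downMax
  congr 2
  exact Finset.image_congr fun q hq => h q (Finset.mem_filter.mp hq).2

theorem IsPPart.togVal_le (hf : IsPPart m f) (p : P) : togVal m f p ≤ m := by
  have := upMin_le m f p
  have := hf.downMax_le p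
  rw [togVal_eq]; omega

theorem IsPPart.togVal_le_of_covBy (hf : IsPPart m f) {p q : P} (h : p ⋖ q) :
    togVal m f p ≤ f q := by
  have := upMin_le_of_covBy (m := m) (f := f) h
  have := hf.downMax_le p
  rw [togVal_eq]; omega

theorem IsPPart.le_togVal_of_covBy (hf : IsPPart m f) {p q : P} (h : q ⋖ p) :
    f q ≤ togVal m f p := by
  have := hf.le_upMin p
  have := le_downMax_of_covBy (f := f) h
  rw [togVal_eq]; omega

end Neighbours

section RankToggles

variable {m : ℕ} {rk : P → ℕ} {i : ℕ}

theorem rankTog_of_rank_eq {q : P} (h : rk q = i) (f : P → ℕ) :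
    rankTog rk m i f q = togVal m f q := if_pos h

theorem rankTog_of_rank_ne {q : P} (h : rk q ≠ i) (f : P → ℕ) :
    rankTog rk m i f q = f q := if_neg h

variable (hcov : ∀ p q : P, p ⋖ q → rk q = rk p + 1)
include hcov

theorem upMin_rankTog {p : P} (h : rk p + 1 ≠ i) (f : P → ℕ) :
    upMin m (rankTog rk m i f) p = upMin m f p :=
  upMin_congr fun q hq => rankTog_of_rank_ne (hcov p q hq ▸ h) f

theorem downMax_rankTog {p : P} (h : rk p ≠ i + 1) (f : P → ℕ) :
    downMax (rankTog rk m i f) p = downMax f p :=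
  downMax_congr fun q hq => rankTog_of_rank_ne (by have := hcov q p hq; omega) f

theorem IsPPart.rankTog {f : P → ℕ} (hf : IsPPart m f) (i : ℕ) :
    IsPPart m (rankTog rk m i f) := by
  refine ⟨fun p => ?_, monotone_of_covBy fun a b hab => ?_⟩
  · by_cases h : rk p = i
    · rw [rankTog_of_rank_eq h]; exact hf.togVal_le p
    · rw [rankTog_of_rank_ne h]; exact hf.1 p
  · have hrk := hcov a b hab
    by_cases ha : rk a = i
    · rw [rankTog_of_rank_eq ha, rankTog_of_rank_ne (by omega)]
      exact hf.togVal_le_of_covBy hab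
    by_cases hb : rk b = i
    · rw [rankTog_of_rank_ne ha, rankTog_of_rank_eq hb]
      exact hf.le_togVal_of_covBy hab
    · rw [rankTog_of_rank_ne ha, rankTog_of_rank_ne hb]
      exact hf.2 hab.le

theorem rankTog_rankTog {f : P → ℕ} (hf : IsPPart m f) (i : ℕ) :
    rankTog rk m i (rankTog rk m i f) = f := by
  funext q
  by_cases hq : rk q = i
  · have := hf.le_upMin q
    have := hf.downMax_le q
    rw [rankTog_of_rank_eq hq, togVal_eq, upMin_rankTog hcov (by omega),
      downMax_rankTog hcov (by omega), rankTog_of_rank_eq hq, togVal_eq]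
    omega
  · rw [rankTog_of_rank_ne hq, rankTog_of_rank_ne hq]

theorem togVal_rankTog {q : P} (h : rk q ≠ i) (hup : rk q + 1 ≠ i) (hdown : rk q ≠ i + 1)
    (f : P → ℕ) : togVal m (rankTog rk m i f) q = togVal m f q := by
  rw [togVal_eq, togVal_eq, upMin_rankTog hcov hup, downMax_rankTog hcov hdown,
    rankTog_of_rank_ne h]

theorem rankTog_comm {i j : ℕ} (hij : i + 2 ≤ j) (f : P → ℕ) :
    rankTog rk m i (rankTog rk m j f) = rankTog rk m j (rankTog rk m i f) := by
  funext q
  by_cases hi : rk q = i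
  · rw [rankTog_of_rank_eq hi, togVal_rankTog hcov (by omega) (by omega) (by omega),
      rankTog_of_rank_ne (by omega), rankTog_of_rank_eq hi]
  by_cases hj : rk q = j
  · rw [rankTog_of_rank_ne hi, rankTog_of_rank_eq hj, rankTog_of_rank_eq hj,
      togVal_rankTog hcov (by omega) (by omega) (by omega)]
  · rw [rankTog_of_rank_ne hi, rankTog_of_rank_ne hj, rankTog_of_rank_ne hj,
      rankTog_of_rank_ne hi]

end RankToggles

end Toggles

section Duality

variable {P : Type*} [PartialOrder P] {m : ℕ}

theorem IsPPart.compl {f : P → ℕ} (hf : IsPPart m f) :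
    IsPPart m (fun q : Pᵒᵈ => m - f (OrderDual.ofDual q)) :=
  ⟨fun _ => Nat.sub_le _ _, fun _ _ h => antitone_const_tsub (hf.2 h)⟩

variable [Fintype P]

theorem image_filter_covBy_ofDual {β : Type*} [DecidableEq β] (g : P → β) (q : Pᵒᵈ) :
    (Finset.univ.filter fun r => q ⋖ r).image (fun x => g (OrderDual.ofDual x)) =
      (Finset.univ.filter fun r => r ⋖ OrderDual.ofDual q).image g := by
  ext y
  simp only [Finset.mem_image, Finset.mem_filter, Finset.mem_univ, true_and]
  constructor
  · rintro ⟨x, hx, rfl⟩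
    exact ⟨OrderDual.ofDual x, hx.ofDual, rfl⟩
  · rintro ⟨x, hx, rfl⟩
    exact ⟨OrderDual.toDual x, hx.toDual, rfl⟩

theorem image_filter_ofDual_covBy {β : Type*} [DecidableEq β] (g : P → β) (q : Pᵒᵈ) :
    (Finset.univ.filter fun r => r ⋖ q).image (fun x => g (OrderDual.ofDual x)) =
      (Finset.univ.filter fun r => OrderDual.ofDual q ⋖ r).image g := by
  ext y
  simp only [Finset.mem_image, Finset.mem_filter, Finset.mem_univ, true_and]
  constructor
  · rintro ⟨x, hx, rfl⟩
    exact ⟨OrderDual.ofDual x, hx.ofDual, rfl⟩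
  · rintro ⟨x, hx, rfl⟩
    exact ⟨OrderDual.toDual x, hx.toDual, rfl⟩

theorem upMin_compl (f : P → ℕ) (q : Pᵒᵈ) :
    upMin m (fun x => m - f (OrderDual.ofDual x)) q = m - downMax f (OrderDual.ofDual q) := by
  unfold upMin downMax
  rw [antitone_const_tsub.map_finset_max']
  congr 1
  rw [Finset.image_insert, Finset.image_image, Nat.sub_zero]
  exact congrArg _ (image_filter_covBy_ofDual (fun s => m - f s) q)

theorem downMax_compl (f : P → ℕ) (q : Pᵒᵈ) :
    downMax (fun x => m - f (OrderDual.ofDual x)) q = m - upMin m f (OrderDual.ofDual q) := by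
  unfold upMin downMax
  rw [antitone_const_tsub.map_finset_min']
  congr 1
  rw [Finset.image_insert, Finset.image_image, Nat.sub_self]
  exact congrArg _ (image_filter_ofDual_covBy (fun s => m - f s) q)

theorem IsPPart.togVal_compl {f : P → ℕ} (hf : IsPPart m f) (q : Pᵒᵈ) :
    togVal m (fun x => m - f (OrderDual.ofDual x)) q = m - togVal m f (OrderDual.ofDual q) := by
  have := hf.le_upMin (OrderDual.ofDual q)
  have := hf.downMax_le (OrderDual.ofDual q)
  have := upMin_le m f (OrderDual.ofDual q)
  rw [togVal_eq, togVal_eq, upMin_compl, downMax_compl]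
  omega

end Duality

abbrev PPart (P : Type*) [PartialOrder P] (m : ℕ) := {f : P → ℕ // IsPPart m f}

section Perm

variable {P : Type*} [PartialOrder P] [Fintype P] {rk : P → ℕ} (m : ℕ)
  (hcov : ∀ p q : P, p ⋖ q → rk q = rk p + 1)

noncomputable def rankTogPerm (i : ℕ) : Equiv.Perm (PPart P m) where
  toFun f := ⟨rankTog rk m i f.1, f.2.rankTog hcov i⟩
  invFun f := ⟨rankTog rk m i f.1, f.2.rankTog hcov i⟩
  left_inv f := Subtype.ext (rankTog_rankTog hcov f.2 i)
  right_inv f := Subtype.ext (rankTog_rankTog hcov f.2 i)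

theorem rankTogPerm_inv (i : ℕ) : (rankTogPerm m hcov i)⁻¹ = rankTogPerm m hcov i := rfl

theorem commute_rankTogPerm (i j : ℕ) (hij : i + 2 ≤ j) :
    Commute (rankTogPerm m hcov i) (rankTogPerm m hcov j) :=
  Equiv.ext fun f => Subtype.ext (rankTog_comm hcov hij f.1)

variable {m} {r : ℕ}

theorem rowFrom_eq_rowWord {j : ℕ} (hj : j ≤ r) (f : PPart P m) :
    rowFrom rk m r j f.1 = (rowWord (rankTogPerm m hcov) (r - j) (j + 1) f).1 := by
  induction j with
  | zero => rfl
  | succ j ih =>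
    rw [rowFrom, ih (by omega), ← show r - (j + 1) + 1 = r - j by omega]
    rfl

theorem rowm_eq_rowWord (f : PPart P m) :
    rowm rk m r f.1 = (rowWord (rankTogPerm m hcov) 0 (r + 1) f).1 := by
  rw [rowm, rowFrom_eq_rowWord hcov le_rfl, Nat.sub_self]

theorem iterate_rowm_eq_rowWord_pow (k : ℕ) (f : PPart P m) :
    (rowm rk m r)^[k] f.1 = ((rowWord (rankTogPerm m hcov) 0 (r + 1) ^ k) f).1 := by
  induction k generalizing f with
  | zero => rfl
  | succ k ih =>
    rw [Function.iterate_succ_apply, rowm_eq_rowWord hcov, ih, pow_succ, Equiv.Perm.mul_apply]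

theorem rvacAux_eq_rvacWord {j : ℕ} (hj : j ≤ r) (f : PPart P m) :
    rvacAux rk m r j f.1 = (rvacWord (rankTogPerm m hcov) (r - j) (j + 1) f).1 := by
  induction j generalizing f with
  | zero => exact rowFrom_eq_rowWord hcov (Nat.zero_le r) f
  | succ j ih =>
    rw [rvacAux, rowFrom_eq_rowWord hcov hj, ih (by omega),
      ← show r - (j + 1) + 1 = r - j by omega]
    rfl

theorem rvac_eq_rvacWord (f : PPart P m) :
    rvac rk m r f.1 = (rvacWord (rankTogPerm m hcov) 0 (r + 1) f).1 := by
  rw [rvac, rvacAux_eq_rvacWord hcov le_rfl, Nat.sub_self]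

end Perm

section DualPerm

variable {P : Type*} [PartialOrder P]

noncomputable def complEquiv (P : Type*) [PartialOrder P] (m : ℕ) :
    PPart P m ≃ PPart Pᵒᵈ m where
  toFun f := ⟨_, f.2.compl⟩
  invFun g := ⟨fun p => m - g.1 (OrderDual.toDual p), g.2.compl⟩
  left_inv f := Subtype.ext (funext fun p => Nat.sub_sub_self (f.2.1 p))
  right_inv g := Subtype.ext (funext fun q => Nat.sub_sub_self (g.2.1 q))

variable [Fintype P] {rk : P → ℕ} {m r : ℕ} (hcov : ∀ p q : P, p ⋖ q → rk q = rk p + 1)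
  (hmax : ∀ p : P, IsMax p → rk p = r)
include hcov hmax

theorem rank_dual_succ_of_covBy (p q : Pᵒᵈ) (h : p ⋖ q) :
    r - rk (OrderDual.ofDual q) = r - rk (OrderDual.ofDual p) + 1 := by
  have := hcov _ _ h.ofDual
  have := rank_le_top hcov hmax (OrderDual.ofDual p)
  omega

theorem rankTogPerm_dual_apply {i : ℕ} (hi : i ≤ r) (f : PPart P m) :
    rankTogPerm m (rank_dual_succ_of_covBy hcov hmax) i (complEquiv P m f) =
      complEquiv P m (rankTogPerm m hcov (r - i) f) := by
  refine Subtype.ext (funext fun q => ?_)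
  have := rank_le_top hcov hmax (OrderDual.ofDual q)
  show rankTog (fun q => r - rk (OrderDual.ofDual q)) m i
      (fun x => m - f.1 (OrderDual.ofDual x)) q = m - rankTog rk m (r - i) f.1 (OrderDual.ofDual q)
  by_cases h : r - rk (OrderDual.ofDual q) = i
  · rw [rankTog_of_rank_eq (rk := fun q => r - rk (OrderDual.ofDual q)) h,
      rankTog_of_rank_eq (by omega), f.2.togVal_compl]
  · rw [rankTog_of_rank_ne (rk := fun q => r - rk (OrderDual.ofDual q)) h,
      rankTog_of_rank_ne (by omega)]

theorem rankTogPerm_dual {i : ℕ} (hi : i ≤ r) :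
    rankTogPerm m (rank_dual_succ_of_covBy hcov hmax) i =
      (complEquiv P m).permCongrHom (rankTogPerm m hcov (r - i)) := by
  refine Equiv.ext fun g => ?_
  obtain ⟨f, rfl⟩ := (complEquiv P m).surjective g
  rw [Equiv.permCongrHom_coe, Equiv.permCongr_apply, Equiv.symm_apply_apply,
    rankTogPerm_dual_apply hcov hmax hi]

theorem rvacStar_eq_rvacDualWord (f : PPart P m) :
    rvacStar rk m r f.1 = (rvacDualWord (rankTogPerm m hcov) 0 (r + 1) f).1 := by
  set φ := (complEquiv P m).permCongrHom
  set g := rvacDualWord (rankTogPerm m hcov) 0 (r + 1) f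
  have hinv (i : ℕ) : (φ (rankTogPerm m hcov i))⁻¹ = φ (rankTogPerm m hcov i) := by
    rw [← map_inv, rankTogPerm_inv]
  have hword : rvacWord (rankTogPerm m (rank_dual_succ_of_covBy hcov hmax)) 0 (r + 1) =
      φ (rvacDualWord (rankTogPerm m hcov) 0 (r + 1)) := by
    rw [map_rvacDualWord, rvacWord_reverse hinv (fun i hi => rankTogPerm_dual hcov hmax hi)
      (by omega), Nat.sub_zero, Nat.sub_self]
  have hdual : rvac (fun q => r - rk (OrderDual.ofDual q)) m r
      (fun q => m - f.1 (OrderDual.ofDual q)) = fun q => m - g.1 (OrderDual.ofDual q) := by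
    refine (rvac_eq_rvacWord (rank_dual_succ_of_covBy hcov hmax) (complEquiv P m f)).trans ?_
    rw [hword, Equiv.permCongrHom_coe, Equiv.permCongr_apply, Equiv.symm_apply_apply]
    rfl
  funext p
  rw [rvacStar, hdual]
  exact Nat.sub_sub_self (g.2.1 p)

end DualPerm

section Main

variable {P : Type*} [PartialOrder P] [Fintype P] {rk : P → ℕ} {m r : ℕ}
  (hcov : ∀ p q : P, p ⋖ q → rk q = rk p + 1)
include hcov

theorem rvac_rvac (f : PPart P m) : rvac rk m r (rvac rk m r f.1) = f.1 := by
  rw [rvac_eq_rvacWord hcov, rvac_eq_rvacWord hcov, ← Equiv.Perm.mul_apply,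
    rvacWord_mul_self (rankTogPerm_inv m hcov) (commute_rankTogPerm m hcov),
    Equiv.Perm.one_apply]

theorem rowm_rvac_rowm (f : PPart P m) :
    rowm rk m r (rvac rk m r (rowm rk m r f.1)) = rvac rk m r f.1 := by
  rw [rowm_eq_rowWord hcov, rvac_eq_rvacWord hcov, rowm_eq_rowWord hcov, rvac_eq_rvacWord hcov,
    ← Equiv.Perm.mul_apply, ← Equiv.Perm.mul_apply,
    rowWord_mul_rvacWord_mul_rowWord (rankTogPerm_inv m hcov) (commute_rankTogPerm m hcov)]

theorem iterate_rowm_eq_rvacStar_rvac (hmax : ∀ p : P, IsMax p → rk p = r) (f : PPart P m) :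
    (rowm rk m r)^[r + 2] f.1 = rvacStar rk m r (rvac rk m r f.1) := by
  rw [iterate_rowm_eq_rowWord_pow hcov, rvac_eq_rvacWord hcov, rvacStar_eq_rvacDualWord hcov hmax,
    ← Equiv.Perm.mul_apply, rowWord_pow_eq_rvacDualWord_mul_rvacWord (rankTogPerm_inv m hcov)
      (commute_rankTogPerm m hcov)]

end Main

theorem rvac_basics_general {P : Type*} [PartialOrder P] [Fintype P]
    (rk : P → ℕ) (r m : ℕ)
    (hcov : ∀ p q : P, p ⋖ q → rk q = rk p + 1)
    (hmax : ∀ p : P, IsMax p → rk p = r) :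
    (∀ f, IsPPart m f → rvac rk m r (rvac rk m r f) = f) ∧
    (∀ f, IsPPart m f →
      rowm rk m r (rvac rk m r (rowm rk m r f)) = rvac rk m r f) ∧
    (∀ f, IsPPart m f →
      (rowm rk m r)^[r + 2] f = rvacStar rk m r (rvac rk m r f)) :=
  ⟨fun f hf => rvac_rvac hcov ⟨f, hf⟩, fun f hf => rowm_rvac_rowm hcov ⟨f, hf⟩,
    fun f hf => iterate_rowm_eq_rvacStar_rvac hcov hmax ⟨f, hf⟩⟩

/-- For any finite graded poset `P` (with rank function `rk`, covers increasing rank by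
one, minimal elements of rank `0`, and maximal elements of rank `r`): rowvacuation is an
involution on `P`-partitions of height `m`; `Rvac ∘ Row = Row⁻¹ ∘ Rvac` (equivalently,
`Row ∘ Rvac ∘ Row = Rvac`); and `Row^{r+2} = Rvac* ∘ Rvac`. -/
theorem rvac_basics {P : Type*} [PartialOrder P] [Fintype P]
    (rk : P → ℕ) (r m : ℕ)
    (hcov : ∀ p q : P, p ⋖ q → rk q = rk p + 1)
    (hmin : ∀ p : P, IsMin p → rk p = 0)
    (hmax : ∀ p : P, IsMax p → rk p = r) :
    (∀ f, IsPPart m f → rvac rk m r (rvac rk m r f) = f) ∧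
    (∀ f, IsPPart m f →
      rowm rk m r (rvac rk m r (rowm rk m r f)) = rvac rk m r f) ∧
    (∀ f, IsPPart m f →
      (rowm rk m r)^[r + 2] f = rvacStar rk m r (rvac rk m r f)) :=
  rvac_basics_general rk r m hcov hmax
end

section
/- The number of order ideals of the type A_n root poset Φ⁺(A_n) equals the Catalan number Cat(n+1) = (1/(n+2))·binomial(2(n+1), n+1). -/
private def gf : ℕ → ℕ → ℕ
  | 0, _ => 1
  | n+1, k => ∑ m ∈ Finset.range (k+1), gf n (k + 1 - m)

private def SeqSet (n k : ℕ) : Type :=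
  {d : Fin n → ℕ // Monotone d ∧ ∀ j : Fin n, d j ≤ j.1 + k}

private instance seqFinite (n k : ℕ) : Finite (SeqSet n k) := by
  apply Finite.of_injective
    (fun d : SeqSet n k => (fun j => (⟨d.1 j, by have := d.2.2 j; have := j.2; omega⟩ :
      Fin (n + k)) : Fin n → Fin (n + k)))
  intro a b h
  apply Subtype.ext; funext j
  have := congrFun h j
  simpa [Fin.ext_iff] using this

private def seqEquiv (n k : ℕ) : SeqSet (n+1) k ≃ (m : Fin (k+1)) × SeqSet n (k + 1 - m.1) where
  toFun d := ⟨⟨d.1 0, by have h := d.2.2 0; simp only [Fin.val_zero, Nat.zero_add] at h; omega⟩,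
    ⟨fun j => d.1 j.succ - d.1 0,
     ⟨fun a b hab => Nat.sub_le_sub_right (d.2.1 (Fin.succ_le_succ_iff.mpr hab)) _,
      fun j => by
        have h1 := d.2.2 j.succ
        have h2 := d.2.2 0
        simp only [Fin.val_succ, Fin.val_zero, Nat.zero_add] at h1 h2 ⊢
        omega⟩⟩⟩
  invFun me := ⟨Fin.cons me.1.1 (fun j => me.2.1 j + me.1.1), by
    constructor
    · intro a b hab
      induction a using Fin.cases with
      | zero =>
        induction b using Fin.cases with
        | zero => exact le_rfl
        | succ b =>
          simp only [Fin.cons_zero, Fin.cons_succ]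
          exact Nat.le_add_left _ _
      | succ a =>
        induction b using Fin.cases with
        | zero => exact absurd (Fin.le_zero_iff.mp hab) (Fin.succ_ne_zero a)
        | succ b =>
          simp only [Fin.cons_succ]
          have : a ≤ b := by
            have := hab
            simpa [Fin.succ_le_succ_iff] using this
          exact Nat.add_le_add_right (me.2.2.1 this) _
    · intro j
      induction j using Fin.cases with
      | zero => simpa using (Nat.lt_succ_iff.mp me.1.2)
      | succ j =>
        simp only [Fin.cons_succ, Fin.val_succ]
        have h1 := me.2.2.2 j
        have h3 : me.1.1 ≤ k := Nat.lt_succ_iff.mp me.1.2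
        omega⟩
  left_inv d := by
    apply Subtype.ext
    funext j
    induction j using Fin.cases with
    | zero => simp
    | succ j =>
      simp only [Fin.cons_succ]
      exact Nat.sub_add_cancel (d.2.1 (Fin.zero_le _))
  right_inv me := by
    rcases me with ⟨m, e⟩
    have hm : (Fin.cons (α := fun _ => ℕ) m.1 (fun j => e.1 j + m.1)) 0 = m.1 := rfl
    apply Sigma.ext
    · simp [Fin.ext_iff]
    · apply heq_of_eq
      apply Subtype.ext
      funext j
      show Fin.cons (α := fun _ => ℕ) m.1 (fun j => e.1 j + m.1) j.succ - m.1 = e.1 j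
      simp

private theorem gf_identity : ∀ n k, gf n k + Nat.choose (2*n+k) (n+k+1) = Nat.choose (2*n+k) (n+k)
  | 0, k => by
    simp [gf, Nat.choose_self, Nat.choose_eq_zero_of_lt (Nat.lt_succ_self _)]
  | n+1, k => by
    induction k with
    | zero =>
      have IH := gf_identity n 1
      have hgf : gf (n+1) 0 = gf n 1 := by simp [gf]
      have sym : (2*n+1).choose n = (2*n+1).choose (n+1) := by
        have := Nat.choose_symm (n := 2*n+1) (k := n+1) (by omega)
        rw [show 2*n+1-(n+1) = n by omega] at this
        exact this
      have pas1 : (2*n+2).choose (n+2) = (2*n+1).choose (n+1) + (2*n+1).choose (n+2) :=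
        Nat.choose_succ_succ _ _
      have pas2 : (2*n+2).choose (n+1) = (2*n+1).choose n + (2*n+1).choose (n+1) :=
        Nat.choose_succ_succ _ _
      have IH' : gf n 1 + (2*n+1).choose (n+2) = (2*n+1).choose (n+1) := by
        rw [show (2*n+1 : ℕ) = 2*n+1 from rfl] at IH
        simpa using IH
      have goal' : gf (n+1) 0 + (2*n+2).choose (n+2) = (2*n+2).choose (n+1) := by
        rw [hgf, pas1, pas2]
        omega
      have e1 : 2*(n+1)+0 = 2*n+2 := by ring
      have e2 : (n+1)+0+1 = n+2 := by ring
      have e3 : (n+1)+0 = n+1 := by ring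
      rw [e1, e2, e3]
      exact goal'
    | succ k ih =>
      have IH := gf_identity n (k+2)
      have hsum : gf (n+1) (k+1) = gf (n+1) k + gf n (k+2) := by
        show (∑ m ∈ Finset.range (k+2), gf n (k + 2 - m)) = _
        rw [Finset.sum_range_succ' (fun m => gf n (k+2-m)) (k+1)]
        simp only [Nat.sub_zero]
        rw [show (gf (n+1) k) = ∑ m ∈ Finset.range (k+1), gf n (k + 1 - m) from rfl]
        congr 1
        exact Finset.sum_congr rfl fun m hm => by
          congr 1
          have := Finset.mem_range.mp hm
          omega
      have ih' : gf (n+1) k + (2*n+k+2).choose (n+k+2) = (2*n+k+2).choose (n+k+1) := by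
        rw [show (2*n+k+2 : ℕ) = 2*(n+1)+k by ring, show (n+k+2 : ℕ) = (n+1)+k+1 by ring,
          show (n+k+1 : ℕ) = (n+1)+k by ring]
        exact ih
      have IH' : gf n (k+2) + (2*n+k+2).choose (n+k+3) = (2*n+k+2).choose (n+k+2) := by
        rw [show (2*n+k+2 : ℕ) = 2*n+(k+2) by ring, show (n+k+3 : ℕ) = n+(k+2)+1 by ring,
          show (n+k+2 : ℕ) = n+(k+2) by ring]
        exact IH
      have pas1 : (2*n+k+3).choose (n+k+3) = (2*n+k+2).choose (n+k+2) + (2*n+k+2).choose (n+k+3) :=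
        Nat.choose_succ_succ _ _
      have pas2 : (2*n+k+3).choose (n+k+2) = (2*n+k+2).choose (n+k+1) + (2*n+k+2).choose (n+k+2) :=
        Nat.choose_succ_succ _ _
      rw [show 2*(n+1)+(k+1) = 2*n+k+3 by ring, show (n+1)+(k+1)+1 = n+k+3 by ring,
        show (n+1)+(k+1) = n+k+2 by ring, hsum, pas1, pas2]
      omega

private theorem seqCard : ∀ n k, Nat.card (SeqSet n k) = gf n k
  | 0, k => by
    haveI : Unique (SeqSet 0 k) :=
      ⟨⟨⟨finZeroElim, ⟨fun a b _ => a.elim0, fun j => j.elim0⟩⟩⟩,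
        fun a => Subtype.ext (funext fun j => j.elim0)⟩
    simp [gf, Nat.card_unique]
  | n+1, k => by
    rw [Nat.card_congr (seqEquiv n k)]
    haveI : ∀ m : Fin (k+1), Fintype (SeqSet n (k+1-m.1)) := fun m => Fintype.ofFinite _
    rw [Nat.card_eq_fintype_card, Fintype.card_sigma]
    show (∑ m : Fin (k+1), Fintype.card (SeqSet n (k+1-m.1))) = ∑ m ∈ Finset.range (k+1), gf n (k + 1 - m)
    rw [← Fin.sum_univ_eq_sum_range (fun m => gf n (k+1-m)) (k+1)]
    exact Finset.sum_congr rfl fun m _ => by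
      rw [← Nat.card_eq_fintype_card]; exact seqCard n (k+1-m.1)

private abbrev PA (n : ℕ) : Type := {p : Fin n × Fin n // p.1 ≤ p.2}

private def IdealType (n : ℕ) : Type :=
  {I : Set (PA n) // ∀ a b : PA n, (a.1.1 ≤ b.1.1 ∧ b.1.2 ≤ a.1.2) → a ∈ I → b ∈ I}

private def colSet (n : ℕ) (I : Set (PA n)) (j : Fin n) : Set ℕ :=
  {i | i = j.1 + 1 ∨ ∃ (hi : i < n) (hij : (⟨i, hi⟩ : Fin n) ≤ j),
    (⟨(⟨i, hi⟩, j), hij⟩ : PA n) ∈ I}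

private theorem colSet_ne (n : ℕ) (I : Set (PA n)) (j : Fin n) : (colSet n I j).Nonempty :=
  ⟨j.1 + 1, Or.inl rfl⟩

private theorem mem_iff (n : ℕ) (I : IdealType n) (p : PA n) :
    p ∈ I.1 ↔ sInf (colSet n I.1 p.1.2) ≤ p.1.1.1 := by
  constructor
  · intro hp
    apply Nat.sInf_le
    exact Or.inr ⟨p.1.1.2, p.2, hp⟩
  · intro h
    have hmem := Nat.sInf_mem (colSet_ne n I.1 p.1.2)
    rcases hmem with h1 | ⟨hi, hij, hq⟩
    · exfalso
      have hle : p.1.1.1 ≤ p.1.2.1 := p.2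
      omega
    · exact I.2 ⟨(⟨sInf (colSet n I.1 p.1.2), hi⟩, p.1.2), hij⟩ p ⟨h, le_refl _⟩ hq

private theorem d_mono (n : ℕ) (I : IdealType n) :
    Monotone (fun j => sInf (colSet n I.1 j)) := by
  intro j j' hjj'
  show sInf (colSet n I.1 j) ≤ sInf (colSet n I.1 j')
  have hjv : j.1 ≤ j'.1 := hjj'
  have hub : sInf (colSet n I.1 j) ≤ j.1 + 1 := Nat.sInf_le (Or.inl rfl)
  rcases Nat.sInf_mem (colSet_ne n I.1 j') with h1 | ⟨hi, hij, hq⟩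
  · omega
  · by_cases hc : sInf (colSet n I.1 j') ≤ j.1
    · apply Nat.sInf_le
      refine Or.inr ⟨hi, hc, ?_⟩
      exact I.2 ⟨(⟨sInf (colSet n I.1 j'), hi⟩, j'), hij⟩
        ⟨(⟨sInf (colSet n I.1 j'), hi⟩, j), hc⟩ ⟨le_refl _, hjj'⟩ hq
    · omega

private noncomputable def mainEquiv (n : ℕ) : IdealType n ≃ SeqSet n 1 where
  toFun I := ⟨fun j => sInf (colSet n I.1 j),
    ⟨d_mono n I, fun j => Nat.sInf_le (Or.inl rfl)⟩⟩
  invFun d := ⟨{p | d.1 p.1.2 ≤ p.1.1.1}, by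
    intro a b hab ha
    have h1 : d.1 b.1.2 ≤ d.1 a.1.2 := d.2.1 hab.2
    have h2 : a.1.1.1 ≤ b.1.1.1 := hab.1
    exact le_trans (le_trans h1 ha) h2⟩
  left_inv I := by
    apply Subtype.ext
    ext p
    exact ((mem_iff n I p)).symm
  right_inv d := by
    apply Subtype.ext
    funext j
    show sInf (colSet n {p : PA n | d.1 p.1.2 ≤ p.1.1.1} j) = d.1 j
    have hb := d.2.2 j
    by_cases hd : d.1 j ≤ j.1
    · apply le_antisymm
      · exact Nat.sInf_le (Or.inr ⟨lt_of_le_of_lt hd j.2, hd, le_refl (d.1 j)⟩)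
      · apply le_csInf ⟨j.1 + 1, Or.inl rfl⟩
        rintro b (rfl | ⟨hi, hij, hq⟩)
        · omega
        · exact hq
    · have hd1 : d.1 j = j.1 + 1 := by omega
      apply le_antisymm
      · have := Nat.sInf_le (s := colSet n {p : PA n | d.1 p.1.2 ≤ p.1.1.1} j)
          (Or.inl rfl : (j.1 + 1) ∈ colSet n {p : PA n | d.1 p.1.2 ≤ p.1.1.1} j)
        omega
      · apply le_csInf ⟨j.1 + 1, Or.inl rfl⟩
        rintro b (rfl | ⟨hi, hij, hq⟩)
        · omega
        · have : b ≤ j.1 := hij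
          have : d.1 j ≤ b := hq
          omega

/-- The number of order ideals of the type `A_n` root poset `Φ⁺(A_n)` — realized as the
poset of pairs `(i, j)` with `i ≤ j`, ordered by `(i,j) ≤ (k,l)` iff `k ≤ i` and `j ≤ l` —
equals the Catalan number `Cat(n+1) = (1/(n+2)) · C(2(n+1), n+1)`. -/
theorem card_ideals_typeA_root_poset (n : ℕ) :
    (n + 2) * Nat.card {I : Set {p : Fin n × Fin n // p.1 ≤ p.2} //
        ∀ a b : {p : Fin n × Fin n // p.1 ≤ p.2},
          (a.1.1 ≤ b.1.1 ∧ b.1.2 ≤ a.1.2) → a ∈ I → b ∈ I} =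
      Nat.choose (2 * (n + 1)) (n + 1) := by
  have hcard : Nat.card {I : Set {p : Fin n × Fin n // p.1 ≤ p.2} //
        ∀ a b : {p : Fin n × Fin n // p.1 ≤ p.2},
          (a.1.1 ≤ b.1.1 ∧ b.1.2 ≤ a.1.2) → a ∈ I → b ∈ I} = gf n 1 :=
    (Nat.card_congr (mainEquiv n)).trans (seqCard n 1)
  rw [hcard]
  have h1 : gf n 1 + (2*n+1).choose (n+2) = (2*n+1).choose (n+1) := gf_identity n 1
  have key : (2*n+1).choose (n+2) * (n+2) = (2*n+1).choose (n+1) * (2*n+1 - (n+1)) :=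
    Nat.choose_succ_right_eq (2*n+1) (n+1)
  rw [show 2*n+1-(n+1) = n by omega] at key
  have sym : (2*n+1).choose n = (2*n+1).choose (n+1) := by
    have h := Nat.choose_symm (n := 2*n+1) (k := n+1) (by omega)
    rw [show 2*n+1-(n+1) = n by omega] at h
    exact h
  have pas : (2*n+2).choose (n+1) = (2*n+1).choose n + (2*n+1).choose (n+1) :=
    Nat.choose_succ_succ _ _
  rw [show 2*(n+1) = 2*n+2 by ring, pas, sym]
  have h2 : (n+2) * gf n 1 + (n+2) * ((2*n+1).choose (n+2)) =
      (n+2) * ((2*n+1).choose (n+1)) := by rw [← Nat.mul_add, h1]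
  have h3 : (n+2) * ((2*n+1).choose (n+2)) = n * ((2*n+1).choose (n+1)) := by
    rw [Nat.mul_comm]; rw [key]; ring
  linarith [h2, h3]
end
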